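/- arXiv:1302.0637 — 5 statements merged into one kernel-verified Lean document; each statement's English description precedes it below -/
import Mathlib

section
/- (Bilinearization of the two-dimensional Toda–Heisenberg lattice.) Let J₁, J₂ be nonzero real numbers, a, b ∈ ℝ, c a nonzero complex number with c² = −J₁J₂e^{2a}, and μ = c/(J₁e^{a+b}). Let τ : ℤ² → ℝ be everywhere positive, σ : ℤ² → ℂ, and set ρ = −conj(σ). Assume that at every point A ∈ ℤ²: (1) τ_A² − τ_N τ_S − σ_A ρ_A = 0; (2) σ_A τ_L − σ_L τ_A + μ(σ_S τ_W − σ_W τ_S) = 0 and ρ_A τ_L − ρ_L τ_A + μ(ρ_S τ_W − ρ_W τ_S) = 0; (3) σ_A τ_U − σ_U τ_A + μ⁻¹(σ_N τ_W − σ_W τ_N) = 0 and ρ_A τ_U − ρ_U τ_A + μ⁻¹(ρ_N τ_W − ρ_W τ_N) = 0; (4) σ_A ρ_W + σ_W ρ_A + μ τ_U τ_S + μ⁻¹ τ_L τ_N − (μ + μ⁻¹) τ_A τ_W = 0. Define u_A = am + bn + (1/2)·ln(τ_S/τ_N) at A = (m,n), q = σ/τ, and φ_B = φ(q_B). Then for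 every A ∈ ℤ², with ε_R = ε_U = 1, ε_L = ε_D = −1, J_R = J_L = J₁, J_U = J_D = J₂, the field equations hold: Σ_{B∈{R,U,L,D}} ε_B J_B exp(ε_B(u_A − u_B)) ⟨φ_A, φ_B⟩ = 0 and Σ_{B∈{R,U,L,D}} J_B exp(ε_B(u_A − u_B)) (φ_A × φ_B) = 0, with the inner product and cross product of ℝ³. -/
open Matrix

/-- `p q = 1 + |q|²`. -/
noncomputable def pfun (q : ℂ) : ℝ := 1 + ‖q‖ ^ 2

/-- `φ(q) = (Re q, Im q, 1)/√(1+|q|²)` as a vector of `ℝ³`. -/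
noncomputable def phi (q : ℂ) : Fin 3 → ℝ :=
  (Real.sqrt (pfun q))⁻¹ • ![q.re, q.im, 1]

/-!
Write `φ(σ/τ)` as the normalisation of the homogeneous vector `v = (Re σ, Im σ, τ)`. By (1) its
Euclidean norm is `√(τ_N τ_S)`, and these norms cancel exactly against the half-logarithms in
`exp (u_A - u_B)`; so every term of the field equations becomes `J e^{a ± b} / (τ τ)` times
`⟨v_A, v_B⟩` or `v_A × v_B`. Since `J₂ e^{a-b} = -μ² J₁ e^{a+b}`, the inner-product equation is then
a polynomial consequence of (1)–(4), while the cross-product equation holds because (2) and (3)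
make the weighted sum of the neighbouring vectors `v_B` parallel to `v_A`.
-/

open ComplexConjugate

def homVec : ℝ × ℂ →ₗ[ℝ] Fin 3 → ℝ where
  toFun p := ![p.2.re, p.2.im, p.1]
  map_add' p p' := by ext i; fin_cases i <;> simp
  map_smul' r p := by ext i; fin_cases i <;> simp

lemma phi_div_ofReal {t : ℝ} (ht : 0 < t) (s : ℂ) :
    phi (s / t) = (√(t ^ 2 + ‖s‖ ^ 2))⁻¹ • homVec (t, s) := by
  have hp : pfun (s / t) = (t ^ 2 + ‖s‖ ^ 2) / t ^ 2 := by
    rw [pfun, norm_div, Complex.norm_real, Real.norm_of_nonneg ht.le]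
    field_simp
  have : 0 < √(t ^ 2 + ‖s‖ ^ 2) := Real.sqrt_pos.2 (by positivity)
  rw [phi, hp, Real.sqrt_div' _ (by positivity), Real.sqrt_sq ht.le]
  ext i
  fin_cases i <;> simp [homVec, Complex.div_ofReal_re, Complex.div_ofReal_im] <;> field_simp

lemma homVec_dotProduct_homVec (t t' : ℝ) (s s' : ℂ) :
    homVec (t, s) ⬝ᵥ homVec (t', s') = t * t' + (s * conj s').re := by
  simp [homVec, dotProduct, Fin.sum_univ_three]
  ring

lemma homVec_cross_homVec_eq_zero {t t' : ℝ} {s s' : ℂ} (ht : t ≠ 0) (h : t * s' = t' * s) :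
    crossProduct (homVec (t, s)) (homVec (t', s')) = 0 := by
  have hre := congrArg Complex.re h
  have him := congrArg Complex.im h
  simp only [Complex.re_ofReal_mul, Complex.im_ofReal_mul] at hre him
  ext i
  fin_cases i <;> simp [homVec, cross_apply]
  · linear_combination -him
  · linear_combination hre
  · refine (mul_eq_zero.1 ?_).resolve_left ht
    linear_combination s.re * him - s.im * hre

lemma exp_add_half_log_div (c : ℝ) {x y : ℝ} (hx : 0 < x) (hy : 0 < y) :
    Real.exp (c + 1 / 2 * Real.log (y / x)) = Real.exp c * √y / √x := by
  rw [Real.exp_add, one_div_mul_eq_div, ← Real.log_sqrt (by positivity),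
    Real.exp_log (by positivity), Real.sqrt_div' _ hx.le, mul_div_assoc]

lemma sq_add_norm_sq_of_sub_mul_eq_zero {t x y : ℝ} {s r : ℂ} (hr : r = -conj s)
    (h : (t : ℂ) ^ 2 - x * y - s * r = 0) : t ^ 2 + ‖s‖ ^ 2 = x * y := by
  rw [hr, mul_neg, Complex.mul_conj'] at h
  exact_mod_cast (by push_cast; linear_combination h : ((t ^ 2 + ‖s‖ ^ 2 : ℝ) : ℂ) = (x * y : ℝ))

/-- The field `sq_add_norm_sq` is equation (1) with `ρ = -σ̄`. -/
structure IsTauFunction (a b : ℝ) (τ : ℤ × ℤ → ℝ) (σ : ℤ × ℤ → ℂ) (u : ℤ × ℤ → ℝ) : Prop where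
  pos : ∀ A, 0 < τ A
  sq_add_norm_sq : ∀ m n : ℤ, τ (m, n) ^ 2 + ‖σ (m, n)‖ ^ 2 = τ (m - 1, n) * τ (m + 1, n)
  u_eq : ∀ m n : ℤ, u (m, n) = a * m + b * n + 1 / 2 * Real.log (τ (m + 1, n) / τ (m - 1, n))

namespace IsTauFunction

variable {a b : ℝ} {τ : ℤ × ℤ → ℝ} {σ : ℤ × ℤ → ℂ} {u : ℤ × ℤ → ℝ}

lemma sqrt_mul_pos (h : IsTauFunction a b τ σ u) (m n : ℤ) :
    0 < √(τ (m - 1, n) * τ (m + 1, n)) :=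
  Real.sqrt_pos.2 (mul_pos (h.pos _) (h.pos _))

lemma phi_eq (h : IsTauFunction a b τ σ u) (m n : ℤ) :
    phi (σ (m, n) / τ (m, n))
      = (√(τ (m - 1, n) * τ (m + 1, n)))⁻¹ • homVec (τ (m, n), σ (m, n)) := by
  rw [phi_div_ofReal (h.pos _), h.sq_add_norm_sq]

lemma exp_sub_eq (h : IsTauFunction a b τ σ u) (m n m' n' : ℤ) :
    Real.exp (u (m, n) - u (m', n'))
      = Real.exp (a * (m - m') + b * (n - n')) / (τ (m - 1, n) * τ (m' + 1, n'))
        * (√(τ (m - 1, n) * τ (m + 1, n)) * √(τ (m' - 1, n') * τ (m' + 1, n'))) := by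
  have hτ := h.pos
  rw [Real.exp_sub, h.u_eq, h.u_eq, exp_add_half_log_div _ (hτ _) (hτ _),
    exp_add_half_log_div _ (hτ _) (hτ _), Real.sqrt_mul (hτ _).le, Real.sqrt_mul (hτ _).le,
    show a * (m - m') + b * (n - n') = (a * m + b * n) - (a * m' + b * n') by ring, Real.exp_sub]
  have hN := Real.sq_sqrt (hτ (m - 1, n)).le
  have hS := Real.sq_sqrt (hτ (m' + 1, n')).le
  set N := √(τ (m - 1, n))
  set S := √(τ (m' + 1, n'))
  have : N ≠ 0 := (Real.sqrt_pos.2 (hτ _)).ne'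
  have : S ≠ 0 := (Real.sqrt_pos.2 (hτ _)).ne'
  have : √(τ (m + 1, n)) ≠ 0 := (Real.sqrt_pos.2 (hτ _)).ne'
  have : √(τ (m' - 1, n')) ≠ 0 := (Real.sqrt_pos.2 (hτ _)).ne'
  rw [← hN, ← hS]
  field_simp

lemma mul_exp_sub_mul_phi_dotProduct_phi (h : IsTauFunction a b τ σ u) (J : ℝ) (m n m' n' : ℤ) :
    J * Real.exp (u (m, n) - u (m', n'))
        * (phi (σ (m, n) / τ (m, n)) ⬝ᵥ phi (σ (m', n') / τ (m', n')))
      = J * Real.exp (a * (m - m') + b * (n - n')) / (τ (m - 1, n) * τ (m' + 1, n'))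
        * (homVec (τ (m, n), σ (m, n)) ⬝ᵥ homVec (τ (m', n'), σ (m', n'))) := by
  rw [h.exp_sub_eq, h.phi_eq, h.phi_eq, smul_dotProduct, dotProduct_smul, smul_eq_mul,
    smul_eq_mul]
  have := h.sqrt_mul_pos m n
  have := h.sqrt_mul_pos m' n'
  set ν := √(τ (m - 1, n) * τ (m + 1, n))
  set ν' := √(τ (m' - 1, n') * τ (m' + 1, n'))
  field_simp

lemma mul_exp_sub_smul_phi_cross_phi (h : IsTauFunction a b τ σ u) (J : ℝ) (m n m' n' : ℤ) :
    (J * Real.exp (u (m, n) - u (m', n')))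
        • crossProduct (phi (σ (m, n) / τ (m, n))) (phi (σ (m', n') / τ (m', n')))
      = (J * Real.exp (a * (m - m') + b * (n - n')) / (τ (m - 1, n) * τ (m' + 1, n')))
        • crossProduct (homVec (τ (m, n), σ (m, n))) (homVec (τ (m', n'), σ (m', n'))) := by
  rw [h.exp_sub_eq, h.phi_eq, h.phi_eq, map_smul, map_smul, LinearMap.smul_apply, smul_smul,
    smul_smul]
  have := h.sqrt_mul_pos m n
  have := h.sqrt_mul_pos m' n'
  set ν := √(τ (m - 1, n) * τ (m + 1, n))
  set ν' := √(τ (m' - 1, n') * τ (m' + 1, n'))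
  congr 1
  field_simp

lemma mul_exp_neg_sub_mul_phi_dotProduct_phi (h : IsTauFunction a b τ σ u) (J : ℝ)
    (m n m' n' : ℤ) :
    J * Real.exp (-(u (m, n) - u (m', n')))
        * (phi (σ (m, n) / τ (m, n)) ⬝ᵥ phi (σ (m', n') / τ (m', n')))
      = J * Real.exp (a * (m' - m) + b * (n' - n)) / (τ (m' - 1, n') * τ (m + 1, n))
        * (homVec (τ (m, n), σ (m, n)) ⬝ᵥ homVec (τ (m', n'), σ (m', n'))) := by
  rw [neg_sub, dotProduct_comm, h.mul_exp_sub_mul_phi_dotProduct_phi, dotProduct_comm]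

lemma mul_exp_neg_sub_smul_phi_cross_phi (h : IsTauFunction a b τ σ u) (J : ℝ)
    (m n m' n' : ℤ) :
    (J * Real.exp (-(u (m, n) - u (m', n'))))
        • crossProduct (phi (σ (m, n) / τ (m, n))) (phi (σ (m', n') / τ (m', n')))
      = (J * Real.exp (a * (m' - m) + b * (n' - n)) / (τ (m' - 1, n') * τ (m + 1, n)))
        • crossProduct (homVec (τ (m, n), σ (m, n))) (homVec (τ (m', n'), σ (m', n'))) := by
  rw [neg_sub, ← cross_anticomm, smul_neg, h.mul_exp_sub_smul_phi_cross_phi, ← smul_neg,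
    cross_anticomm]

end IsTauFunction

section Bilinear

variable {K : Type*} [Field K]

/-- Equation (2) of the bilinear system, at every point. -/
def BilinearL (μ : K) (t f : ℤ × ℤ → K) : Prop :=
  ∀ m n : ℤ, f (m, n) * t (m + 1, n + 1) - f (m + 1, n + 1) * t (m, n)
    + μ * (f (m + 1, n) * t (m, n + 1) - f (m, n + 1) * t (m + 1, n)) = 0

/-- Equation (3) of the bilinear system, at every point. -/
def BilinearU (μ : K) (t f : ℤ × ℤ → K) : Prop :=
  ∀ m n : ℤ, f (m, n) * t (m - 1, n + 1) - f (m - 1, n + 1) * t (m, n)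
    + μ⁻¹ * (f (m - 1, n) * t (m, n + 1) - f (m, n + 1) * t (m - 1, n)) = 0

variable {μ : K} {t f g : ℤ × ℤ → K}

lemma tau_cross_sum_eq_zero (hμ : μ ≠ 0) (hL : BilinearL μ t f) (hU : BilinearU μ t f)
    (ht : ∀ A, t A ≠ 0) (m n : ℤ) :
    (t (m, n) * f (m - 1, n - 1) - t (m - 1, n - 1) * f (m, n)) / (t (m - 1, n) * t (m, n - 1))
      - μ ^ 2 * (t (m, n) * f (m - 1, n + 1) - t (m - 1, n + 1) * f (m, n))
        / (t (m - 1, n) * t (m, n + 1))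
      + (t (m, n) * f (m + 1, n + 1) - t (m + 1, n + 1) * f (m, n)) / (t (m, n + 1) * t (m + 1, n))
      - μ ^ 2 * (t (m, n) * f (m + 1, n - 1) - t (m + 1, n - 1) * f (m, n))
        / (t (m, n - 1) * t (m + 1, n))
      = 0 := by
  have hR := hL (m - 1) (n - 1)
  have hA := hU m n
  have hD := hU (m + 1) (n - 1)
  simp only [sub_add_cancel, add_sub_cancel_right] at hR hD
  have := ht (m - 1, n); have := ht (m + 1, n); have := ht (m, n - 1); have := ht (m, n + 1)
  field_simp at hA hD ⊢
  linear_combination t (m + 1, n) * t (m, n + 1) * hR - t (m - 1, n) * t (m, n - 1) * hL m n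
    + μ * t (m + 1, n) * t (m, n - 1) * hA - μ * t (m - 1, n) * t (m, n + 1) * hD

lemma tau_dot_sum_eq_zero (hμ : μ ≠ 0)
    (h1 : ∀ m n : ℤ, t (m, n) ^ 2 - t (m - 1, n) * t (m + 1, n) - f (m, n) * g (m, n) = 0)
    (hLf : BilinearL μ t f) (hLg : BilinearL μ t g) (hUf : BilinearU μ t f)
    (hUg : BilinearU μ t g)
    (h4 : ∀ m n : ℤ, f (m, n) * g (m, n + 1) + f (m, n + 1) * g (m, n)
      + μ * t (m - 1, n + 1) * t (m + 1, n) + μ⁻¹ * t (m + 1, n + 1) * t (m - 1, n)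
      - (μ + μ⁻¹) * t (m, n) * t (m, n + 1) = 0)
    (ht : ∀ A, t A ≠ 0) (m n : ℤ) :
    (2 * t (m, n) * t (m - 1, n - 1) - (f (m, n) * g (m - 1, n - 1) + f (m - 1, n - 1) * g (m, n)))
        / (t (m - 1, n) * t (m, n - 1))
      - μ ^ 2 * (2 * t (m, n) * t (m - 1, n + 1)
          - (f (m, n) * g (m - 1, n + 1) + f (m - 1, n + 1) * g (m, n)))
        / (t (m - 1, n) * t (m, n + 1))
      - (2 * t (m, n) * t (m + 1, n + 1)
          - (f (m, n) * g (m + 1, n + 1) + f (m + 1, n + 1) * g (m, n)))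
        / (t (m, n + 1) * t (m + 1, n))
      + μ ^ 2 * (2 * t (m, n) * t (m + 1, n - 1)
          - (f (m, n) * g (m + 1, n - 1) + f (m + 1, n - 1) * g (m, n)))
        / (t (m, n - 1) * t (m + 1, n))
      = 0 := by
  have hRf := hLf (m - 1) (n - 1)
  have hRg := hLg (m - 1) (n - 1)
  have hAf := hUf m n
  have hAg := hUg m n
  have hDf := hUf (m + 1) (n - 1)
  have hDg := hUg (m + 1) (n - 1)
  have hA4 := h4 m n
  have hE4 := h4 m (n - 1)
  simp only [sub_add_cancel, add_sub_cancel_right] at hRf hRg hDf hDg hE4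
  have := ht (m - 1, n); have := ht (m + 1, n); have := ht (m, n - 1); have := ht (m, n + 1)
  refine (mul_eq_zero.1 ?_).resolve_left (ht (m, n))
  field_simp at hAf hAg hDf hDg hA4 hE4 ⊢
  linear_combination 2 * (t (m + 1, n) * t (m, n + 1) * t (m - 1, n - 1)
      - t (m - 1, n) * t (m, n - 1) * t (m + 1, n + 1)
      - μ ^ 2 * t (m + 1, n) * t (m, n - 1) * t (m - 1, n + 1)
      + μ ^ 2 * t (m - 1, n) * t (m, n + 1) * t (m + 1, n - 1)) * h1 m n
    - t (m + 1, n) * t (m, n + 1) * (f (m, n) * hRg + g (m, n) * hRf)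
    - t (m - 1, n) * t (m, n - 1) * (f (m, n) * hLg m n + g (m, n) * hLf m n)
    - μ * t (m + 1, n) * t (m, n - 1) * (f (m, n) * hAg + g (m, n) * hAf)
    - μ * t (m - 1, n) * t (m, n + 1) * (f (m, n) * hDg + g (m, n) * hDf)
    + 2 * t (m - 1, n) * t (m + 1, n) * t (m, n + 1) * hE4
    - 2 * t (m - 1, n) * t (m + 1, n) * t (m, n - 1) * hA4

end Bilinear

lemma mul_exp_sub_eq_neg_sq_mul_mul_exp_add {J₁ J₂ a b : ℝ} {c μ : ℂ} (hJ₁ : J₁ ≠ 0)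
    (hc2 : c ^ 2 = -(J₁ * J₂ * Real.exp (2 * a) : ℝ))
    (hμ : μ = c / (J₁ * Real.exp (a + b) : ℝ)) :
    ((J₂ * Real.exp (a - b) : ℝ) : ℂ) = -μ ^ 2 * (J₁ * Real.exp (a + b) : ℝ) := by
  set κ : ℝ := J₁ * Real.exp (a + b)
  have hκ : (κ : ℂ) ≠ 0 := by exact_mod_cast mul_ne_zero hJ₁ (Real.exp_ne_zero _)
  have hμκ : μ * κ = c := by rw [hμ]; exact div_mul_cancel₀ c hκ
  have hJ : J₁ * J₂ * Real.exp (2 * a) = J₂ * Real.exp (a - b) * κ := by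
    rw [show 2 * a = (a - b) + (a + b) by ring, Real.exp_add]; ring
  apply mul_right_cancel₀ hκ
  rw [hJ] at hc2
  push_cast at hc2 ⊢
  linear_combination hc2 + (μ * κ + c) * hμκ

theorem stmt9_general (J₁ J₂ a b : ℝ) (c μ : ℂ) (hJ₁ : J₁ ≠ 0) (hc : c ≠ 0)
    (hc2 : c ^ 2 = -(J₁ * J₂ * Real.exp (2 * a) : ℝ))
    (hμ : μ = c / (J₁ * Real.exp (a + b) : ℝ))
    (τ : ℤ × ℤ → ℝ) (hτ : ∀ A, 0 < τ A)
    (σ ρ : ℤ × ℤ → ℂ) (hρ : ∀ A, ρ A = -(starRingEnd ℂ) (σ A))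
    (h1 : ∀ m n : ℤ, ((τ (m, n) : ℂ)) ^ 2 - (τ (m - 1, n) : ℂ) * (τ (m + 1, n) : ℂ)
      - σ (m, n) * ρ (m, n) = 0)
    (h2σ : ∀ m n : ℤ, σ (m, n) * (τ (m + 1, n + 1) : ℂ) - σ (m + 1, n + 1) * (τ (m, n) : ℂ)
      + μ * (σ (m + 1, n) * (τ (m, n + 1) : ℂ) - σ (m, n + 1) * (τ (m + 1, n) : ℂ)) = 0)
    (h2ρ : ∀ m n : ℤ, ρ (m, n) * (τ (m + 1, n + 1) : ℂ) - ρ (m + 1, n + 1) * (τ (m, n) : ℂ)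
      + μ * (ρ (m + 1, n) * (τ (m, n + 1) : ℂ) - ρ (m, n + 1) * (τ (m + 1, n) : ℂ)) = 0)
    (h3σ : ∀ m n : ℤ, σ (m, n) * (τ (m - 1, n + 1) : ℂ) - σ (m - 1, n + 1) * (τ (m, n) : ℂ)
      + μ⁻¹ * (σ (m - 1, n) * (τ (m, n + 1) : ℂ) - σ (m, n + 1) * (τ (m - 1, n) : ℂ)) = 0)
    (h3ρ : ∀ m n : ℤ, ρ (m, n) * (τ (m - 1, n + 1) : ℂ) - ρ (m - 1, n + 1) * (τ (m, n) : ℂ)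
      + μ⁻¹ * (ρ (m - 1, n) * (τ (m, n + 1) : ℂ) - ρ (m, n + 1) * (τ (m - 1, n) : ℂ)) = 0)
    (h4 : ∀ m n : ℤ, σ (m, n) * ρ (m, n + 1) + σ (m, n + 1) * ρ (m, n)
      + μ * (τ (m - 1, n + 1) : ℂ) * (τ (m + 1, n) : ℂ)
      + μ⁻¹ * (τ (m + 1, n + 1) : ℂ) * (τ (m - 1, n) : ℂ)
      - (μ + μ⁻¹) * (τ (m, n) : ℂ) * (τ (m, n + 1) : ℂ) = 0)
    (u : ℤ × ℤ → ℝ) (q : ℤ × ℤ → ℂ)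
    (hu : ∀ m n : ℤ, u (m, n)
      = a * m + b * n + (1 / 2) * Real.log (τ (m + 1, n) / τ (m - 1, n)))
    (hq : ∀ A, q A = σ A / (τ A : ℂ)) :
    ∀ m n : ℤ,
      (J₁ * Real.exp (u (m, n) - u (m - 1, n - 1)) * (phi (q (m, n)) ⬝ᵥ phi (q (m - 1, n - 1)))
        + J₂ * Real.exp (u (m, n) - u (m - 1, n + 1)) * (phi (q (m, n)) ⬝ᵥ phi (q (m - 1, n + 1)))
        - J₁ * Real.exp (-(u (m, n) - u (m + 1, n + 1))) * (phi (q (m, n)) ⬝ᵥ phi (q (m + 1, n + 1)))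
        - J₂ * Real.exp (-(u (m, n) - u (m + 1, n - 1))) * (phi (q (m, n)) ⬝ᵥ phi (q (m + 1, n - 1)))
        = 0) ∧
      ((J₁ * Real.exp (u (m, n) - u (m - 1, n - 1))) •
          crossProduct (phi (q (m, n))) (phi (q (m - 1, n - 1)))
        + (J₂ * Real.exp (u (m, n) - u (m - 1, n + 1))) •
          crossProduct (phi (q (m, n))) (phi (q (m - 1, n + 1)))
        + (J₁ * Real.exp (-(u (m, n) - u (m + 1, n + 1)))) •
          crossProduct (phi (q (m, n))) (phi (q (m + 1, n + 1)))
        + (J₂ * Real.exp (-(u (m, n) - u (m + 1, n - 1)))) •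
          crossProduct (phi (q (m, n))) (phi (q (m + 1, n - 1)))
        = 0) := by
  intro m n
  have hT : IsTauFunction a b τ σ u :=
    ⟨hτ, fun m n => sq_add_norm_sq_of_sub_mul_eq_zero (hρ _) (h1 m n), hu⟩
  obtain rfl : q = fun A => σ A / τ A := funext hq
  simp only [hT.mul_exp_sub_mul_phi_dotProduct_phi, hT.mul_exp_neg_sub_mul_phi_dotProduct_phi,
    hT.mul_exp_sub_smul_phi_cross_phi, hT.mul_exp_neg_sub_smul_phi_cross_phi, sub_add_cancel,
    add_sub_cancel_right, Int.cast_sub, Int.cast_add, Int.cast_one, sub_sub_cancel,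
    sub_sub_cancel_left, add_sub_cancel_left, sub_add_cancel_left, mul_one, mul_neg,
    ← sub_eq_add_neg]
  have hμ0 : μ ≠ 0 := by
    rw [hμ]; exact div_ne_zero hc (by exact_mod_cast mul_ne_zero hJ₁ (Real.exp_ne_zero _))
  have hJ := mul_exp_sub_eq_neg_sq_mul_mul_exp_add hJ₁ hc2 hμ
  push_cast at hJ
  have hτ0 : ∀ A, (τ A : ℂ) ≠ 0 := fun A => Complex.ofReal_ne_zero.2 (hτ A).ne'
  constructor
  · have hconj : ∀ A, conj (σ A) = -ρ A := fun A => by rw [hρ, neg_neg]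
    simp only [homVec_dotProduct_homVec]
    apply Complex.ofReal_injective
    push_cast
    simp only [Complex.re_eq_add_conj, map_mul, Complex.conj_conj, hJ]
    simp only [hconj]
    linear_combination (J₁ * Complex.exp (a + b) / 2) * tau_dot_sum_eq_zero
      (t := fun A => (τ A : ℂ)) hμ0 h1 h2σ h2ρ h3σ h3ρ h4 hτ0 m n
  · simp only [← map_smul, ← map_add]
    apply homVec_cross_homVec_eq_zero (hτ _).ne'
    simp only [Prod.fst_add, Prod.snd_add, Prod.smul_fst, Prod.smul_snd, Complex.real_smul,
      smul_eq_mul]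
    push_cast
    rw [hJ]
    linear_combination (J₁ * Complex.exp (a + b)) * tau_cross_sum_eq_zero
      (t := fun A => (τ A : ℂ)) hμ0 h2σ h3σ hτ0 m n

/-- Bilinearization of the two-dimensional Toda–Heisenberg lattice: solutions of the
bilinear system (1)–(4) give solutions of the field equations.  Lattice convention: at
`A = (m,n)` the neighbours are `S = (m+1,n)`, `N = (m−1,n)`, `W = (m,n+1)`, `E = (m,n−1)`,
`L = (m+1,n+1)`, `R = (m−1,n−1)`, `U = (m−1,n+1)`, `D = (m+1,n−1)`. -/
theorem stmt9 (J₁ J₂ a b : ℝ) (c μ : ℂ) (hJ₁ : J₁ ≠ 0) (hJ₂ : J₂ ≠ 0) (hc : c ≠ 0)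
    (hc2 : c ^ 2 = -(J₁ * J₂ * Real.exp (2 * a) : ℝ))
    (hμ : μ = c / (J₁ * Real.exp (a + b) : ℝ))
    (τ : ℤ × ℤ → ℝ) (hτ : ∀ A, 0 < τ A)
    (σ ρ : ℤ × ℤ → ℂ) (hρ : ∀ A, ρ A = -(starRingEnd ℂ) (σ A))
    (h1 : ∀ m n : ℤ, ((τ (m, n) : ℂ)) ^ 2 - (τ (m - 1, n) : ℂ) * (τ (m + 1, n) : ℂ)
      - σ (m, n) * ρ (m, n) = 0)
    (h2σ : ∀ m n : ℤ, σ (m, n) * (τ (m + 1, n + 1) : ℂ) - σ (m + 1, n + 1) * (τ (m, n) : ℂ)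
      + μ * (σ (m + 1, n) * (τ (m, n + 1) : ℂ) - σ (m, n + 1) * (τ (m + 1, n) : ℂ)) = 0)
    (h2ρ : ∀ m n : ℤ, ρ (m, n) * (τ (m + 1, n + 1) : ℂ) - ρ (m + 1, n + 1) * (τ (m, n) : ℂ)
      + μ * (ρ (m + 1, n) * (τ (m, n + 1) : ℂ) - ρ (m, n + 1) * (τ (m + 1, n) : ℂ)) = 0)
    (h3σ : ∀ m n : ℤ, σ (m, n) * (τ (m - 1, n + 1) : ℂ) - σ (m - 1, n + 1) * (τ (m, n) : ℂ)
      + μ⁻¹ * (σ (m - 1, n) * (τ (m, n + 1) : ℂ) - σ (m, n + 1) * (τ (m - 1, n) : ℂ)) = 0)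
    (h3ρ : ∀ m n : ℤ, ρ (m, n) * (τ (m - 1, n + 1) : ℂ) - ρ (m - 1, n + 1) * (τ (m, n) : ℂ)
      + μ⁻¹ * (ρ (m - 1, n) * (τ (m, n + 1) : ℂ) - ρ (m, n + 1) * (τ (m - 1, n) : ℂ)) = 0)
    (h4 : ∀ m n : ℤ, σ (m, n) * ρ (m, n + 1) + σ (m, n + 1) * ρ (m, n)
      + μ * (τ (m - 1, n + 1) : ℂ) * (τ (m + 1, n) : ℂ)
      + μ⁻¹ * (τ (m + 1, n + 1) : ℂ) * (τ (m - 1, n) : ℂ)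
      - (μ + μ⁻¹) * (τ (m, n) : ℂ) * (τ (m, n + 1) : ℂ) = 0)
    (u : ℤ × ℤ → ℝ) (q : ℤ × ℤ → ℂ)
    (hu : ∀ m n : ℤ, u (m, n)
      = a * m + b * n + (1 / 2) * Real.log (τ (m + 1, n) / τ (m - 1, n)))
    (hq : ∀ A, q A = σ A / (τ A : ℂ)) :
    ∀ m n : ℤ,
      (J₁ * Real.exp (u (m, n) - u (m - 1, n - 1)) * (phi (q (m, n)) ⬝ᵥ phi (q (m - 1, n - 1)))
        + J₂ * Real.exp (u (m, n) - u (m - 1, n + 1)) * (phi (q (m, n)) ⬝ᵥ phi (q (m - 1, n + 1)))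
        - J₁ * Real.exp (-(u (m, n) - u (m + 1, n + 1))) * (phi (q (m, n)) ⬝ᵥ phi (q (m + 1, n + 1)))
        - J₂ * Real.exp (-(u (m, n) - u (m + 1, n - 1))) * (phi (q (m, n)) ⬝ᵥ phi (q (m + 1, n - 1)))
        = 0) ∧
      ((J₁ * Real.exp (u (m, n) - u (m - 1, n - 1))) •
          crossProduct (phi (q (m, n))) (phi (q (m - 1, n - 1)))
        + (J₂ * Real.exp (u (m, n) - u (m - 1, n + 1))) •
          crossProduct (phi (q (m, n))) (phi (q (m - 1, n + 1)))
        + (J₁ * Real.exp (-(u (m, n) - u (m + 1, n + 1)))) •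
          crossProduct (phi (q (m, n))) (phi (q (m + 1, n + 1)))
        + (J₂ * Real.exp (-(u (m, n) - u (m + 1, n - 1)))) •
          crossProduct (phi (q (m, n))) (phi (q (m + 1, n - 1)))
        = 0) :=
  stmt9_general J₁ J₂ a b c μ hJ₁ hc hc2 hμ τ hτ σ ρ hρ h1 h2σ h2ρ h3σ h3ρ h4 u q hu hq
end

section
/- Let μ, τ, σ, ρ, τ_W, σ_W, ρ_W, τ_S, τ_N, τ_L, τ_U, τ_X, τ_NX, ρ_X, ρ_NX be complex numbers with μ ≠ 0, σ ≠ 0, σ_W ≠ 0, and (τ_X, τ_NX) ≠ (0,0). Assume: τ² − ρσ − τ_Sτ_N = 0; τ_W² − ρ_Wσ_W − τ_Lτ_U = 0; ττ_X − σρ_X − τ_Sτ_NX = 0; μρ_Xσ_W − τ_Wτ_X + τ_Lτ_NX = 0; μσρ_NX − ττ_NX + τ_Nτ_X = 0; τ_NXτ_W − ρ_NXσ_W − τ_Xτ_U = 0. Then σρ_W + ρσ_W − (μ + μ⁻¹)ττ_W + μτ_Sτ_U + μ⁻¹τ_Nτ_L = 0. -/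
/-- Under the six bilinear relations, the five-point equation
`σρ_W + ρσ_W − (μ + μ⁻¹)ττ_W + μτ_Sτ_U + μ⁻¹τ_Nτ_L = 0` holds. -/
theorem stmt14 (μ τ σ ρ τW σW ρW τS τN τL τU τX τNX ρX ρNX : ℂ)
    (hμ : μ ≠ 0) (hσ : σ ≠ 0) (hσW : σW ≠ 0) (hX : (τX, τNX) ≠ (0, 0))
    (h1 : τ ^ 2 - ρ * σ - τS * τN = 0)
    (h2 : τW ^ 2 - ρW * σW - τL * τU = 0)
    (h3 : τ * τX - σ * ρX - τS * τNX = 0)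
    (h4 : μ * ρX * σW - τW * τX + τL * τNX = 0)
    (h5 : μ * σ * ρNX - τ * τNX + τN * τX = 0)
    (h6 : τNX * τW - ρNX * σW - τX * τU = 0) :
    σ * ρW + ρ * σW - (μ + μ⁻¹) * τ * τW + μ * τS * τU + μ⁻¹ * τN * τL = 0 := by
  have h0 : μ * μ⁻¹ = 1 := mul_inv_cancel₀ hμ
  have hcase : τX ≠ 0 ∨ τNX ≠ 0 := by
    rcases eq_or_ne τX 0 with h | h
    · right; intro h2; exact hX (by simp [h, h2])
    · left; exact h
  obtain hT | hT := hcase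
  · have hne : μ * σ * σW * τX ^ 2 ≠ 0 :=
      mul_ne_zero (mul_ne_zero (mul_ne_zero hμ hσ) hσW) (pow_ne_zero 2 hT)
    have key : (σ * ρW + ρ * σW - (μ + μ⁻¹) * τ * τW + μ * τS * τU + μ⁻¹ * τN * τL)
        * (μ * σ * σW * τX ^ 2) = 0 := by
      linear_combination ((σ * τL - μ * σW * τS) * τX * σW) * h5
        + ((σ * τL - μ * σW * τS) * τX * (μ * σ)) * h6
        + ((τ * σW - μ * σ * τW) * τX * (μ * σW)) * h3
        + ((τ * σW - μ * σ * τW) * τX * σ) * h4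
        - (μ * σW ^ 2 * τX ^ 2) * h1
        - (μ * σ ^ 2 * τX ^ 2) * h2
        + (σ * σW * τX ^ 2 * (τN * τL - τ * τW)) * h0
    exact (mul_eq_zero.mp key).resolve_right hne
  · have hne : μ * σ * σW * τNX ^ 2 ≠ 0 :=
      mul_ne_zero (mul_ne_zero (mul_ne_zero hμ hσ) hσW) (pow_ne_zero 2 hT)
    have key : (σ * ρW + ρ * σW - (μ + μ⁻¹) * τ * τW + μ * τS * τU + μ⁻¹ * τN * τL)
        * (μ * σ * σW * τNX ^ 2) = 0 := by
      linear_combination ((σ * τW - μ * τ * σW) * τNX * σW) * h5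
        + ((σ * τW - μ * τ * σW) * τNX * (μ * σ)) * h6
        + ((σW * τN - μ * σ * τU) * τNX * (μ * σW)) * h3
        + ((σW * τN - μ * σ * τU) * τNX * σ) * h4
        - (μ * σW ^ 2 * τNX ^ 2) * h1
        - (μ * σ ^ 2 * τNX ^ 2) * h2
        + (σ * σW * τNX ^ 2 * (τN * τL - τ * τW)) * h0
    exact (mul_eq_zero.mp key).resolve_right hne
end

section
/- Let L, R be invertible diagonal N×N complex matrices, |e⟩ a column vector, ⟨a|, ⟨b| row vectors, and A, B N×N complex matrices satisfying the rank-one conditions L·A − A·R = |e⟩⟨a| and R·B − B·L = |e⟩⟨b|, and such that 1 − BA is invertible. Set q = ⟨a|(1 − BA)⁻¹R⁻¹|e⟩ and r = −⟨b|L⁻¹(1 − AB)⁻¹|e⟩. Then det(1 − ARBL⁻¹) · det(1 − AR⁻¹BL) = det(1 − AB)² · (1 − q·r). -/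
/-!
Conjugating `A` by `L⁻¹` and `R` (resp. `L` and `R⁻¹`) changes it by a rank-one matrix, because
`LA − AR = |e⟩⟨a|`. By Sylvester's determinant identity and the matrix determinant lemma each
factor on the left is therefore `det(1 − AB)` times `1 + x`, resp. `1 − y`, where
`x = ⟨a|B(1 − AB)⁻¹L⁻¹|e⟩` and `y = ⟨a|R⁻¹B(1 − AB)⁻¹|e⟩`. What remains is `qr = −(x − y − xy)`:
writing `qr` as `⟨a|(1 − BA)⁻¹R⁻¹ |e⟩⟨b| L⁻¹(1 − AB)⁻¹|e⟩` and replacing `|e⟩⟨b|` by `RB − BL`,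
the push-through identity `(1 − BA)⁻¹B = B(1 − AB)⁻¹` turns the middle matrix into
`M L⁻¹ − R⁻¹M − M L⁻¹ (LA − AR) R⁻¹ M` with `M = B(1 − AB)⁻¹`.
-/

open Matrix

namespace Matrix

variable {l m n o p K : Type*} [CommRing K]

theorem vecMul_mul_vecMulVec_mul_dotProduct [Fintype l] [Fintype m] [Fintype o] [Fintype p]
    (x : l → K) (X : Matrix l m K) (u : m → K) (v : o → K) (Y : Matrix o p K) (y : p → K) :
    x ᵥ* (X * vecMulVec u v * Y) ⬝ᵥ y = (x ᵥ* X ⬝ᵥ u) * (v ᵥ* Y ⬝ᵥ y) := by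
  rw [mul_vecMulVec, vecMulVec_mul, vecMul_vecMulVec, smul_dotProduct, smul_eq_mul,
    dotProduct_mulVec]

variable [Fintype n]

theorem det_sub_vecMulVec [DecidableEq n] {P : Matrix n n K} (hP : IsUnit P.det) (u v : n → K) :
    (P - vecMulVec u v).det = P.det * (1 - v ⬝ᵥ P⁻¹ *ᵥ u) := by
  rw [sub_eq_add_neg, ← neg_vecMulVec, vecMulVec_eq Unit, det_add_replicateCol_mul_replicateRow hP,
    det_unique (n := Unit), add_apply, one_apply_eq, Matrix.mul_assoc, ← replicateCol_mulVec,
    replicateRow_mul_replicateCol_apply, mulVec_neg, dotProduct_neg, ← sub_eq_add_neg]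

-- Both sides vanish when `1 - A * B` is singular, by the junk value of `⁻¹`.
theorem inv_one_sub_mul_mul [DecidableEq n] [Fintype m] [DecidableEq m] (A : Matrix m n K)
    (B : Matrix n m K) :
    (1 - B * A)⁻¹ * B = B * (1 - A * B)⁻¹ := by
  by_cases h : IsUnit (1 - A * B).det
  · have h' : IsUnit (1 - B * A).det := by rwa [← det_one_sub_mul_comm]
    have hcomm : (1 - B * A) * B = B * (1 - A * B) := by
      rw [Matrix.sub_mul, Matrix.mul_sub, Matrix.one_mul, Matrix.mul_one, Matrix.mul_assoc]
    calc (1 - B * A)⁻¹ * B = (1 - B * A)⁻¹ * ((1 - B * A) * B) * (1 - A * B)⁻¹ := by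
          rw [hcomm, ← Matrix.mul_assoc _ B, mul_nonsing_inv_cancel_right _ _ h]
      _ = B * (1 - A * B)⁻¹ := by rw [nonsing_inv_mul_cancel_left _ _ h']
  · have h' : ¬IsUnit (1 - B * A).det := by rwa [← det_one_sub_mul_comm]
    rw [nonsing_inv_apply_not_isUnit _ h, nonsing_inv_apply_not_isUnit _ h', Matrix.zero_mul,
      Matrix.mul_zero]

theorem det_one_sub_twisted_mul [Fintype m] [DecidableEq m] {X : Matrix m m K} {A : Matrix m n K}
    {Y : Matrix n n K} {B : Matrix n m K} {u : m → K} {v : n → K}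
    (hXAY : X * A * Y = A + vecMulVec u v) (hAB : IsUnit (1 - A * B).det) :
    (1 - A * Y * B * X).det = (1 - A * B).det * (1 - v ᵥ* (B * (1 - A * B)⁻¹) ⬝ᵥ u) := by
  rw [det_one_sub_mul_comm, ← Matrix.mul_assoc, ← Matrix.mul_assoc, hXAY, Matrix.add_mul,
    vecMulVec_mul, ← sub_sub, det_sub_vecMulVec hAB, dotProduct_mulVec, vecMul_vecMul]

theorem inv_one_sub_mul_mul_twisted_commutator [DecidableEq n] {L R A B : Matrix n n K}
    (hL : IsUnit L.det) (hR : IsUnit R.det) (hAB : IsUnit (1 - A * B).det) :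
    (1 - B * A)⁻¹ * R⁻¹ * (R * B - B * L) * (L⁻¹ * (1 - A * B)⁻¹)
      = B * (1 - A * B)⁻¹ * L⁻¹ - R⁻¹ * (B * (1 - A * B)⁻¹)
        - B * (1 - A * B)⁻¹ * L⁻¹ * (L * A - A * R) * (R⁻¹ * (B * (1 - A * B)⁻¹)) := by
  have hBA : IsUnit (1 - B * A).det := by rwa [det_one_sub_mul_comm]
  have hQB := inv_one_sub_mul_mul A B
  set Q := (1 - B * A)⁻¹
  set P := (1 - A * B)⁻¹
  set M := B * P
  have hP : P = 1 + A * M := by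
    calc P = (1 - A * B + A * B) * P := by rw [sub_add_cancel, Matrix.one_mul]
      _ = 1 + A * M := by rw [Matrix.add_mul, mul_nonsing_inv _ hAB, Matrix.mul_assoc]
  have hQ : Q = 1 + M * A := by
    calc Q = Q * (1 - B * A + B * A) := by rw [sub_add_cancel, Matrix.mul_one]
      _ = 1 + M * A := by rw [Matrix.mul_add, nonsing_inv_mul _ hBA, ← Matrix.mul_assoc, hQB]
  calc Q * R⁻¹ * (R * B - B * L) * (L⁻¹ * P)
      = Q * (R⁻¹ * R) * B * L⁻¹ * P - Q * R⁻¹ * (B * (L * L⁻¹) * P) := by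
        noncomm_ring
    _ = M * L⁻¹ * P - Q * R⁻¹ * M := by
        rw [nonsing_inv_mul _ hR, mul_nonsing_inv _ hL, Matrix.mul_one, Matrix.mul_one, hQB]
    _ = M * L⁻¹ * (1 + A * M) - (1 + M * A) * R⁻¹ * M := by rw [← hP, ← hQ]
    _ = M * L⁻¹ - R⁻¹ * M - M * (L⁻¹ * L) * A * R⁻¹ * M + M * L⁻¹ * A * (R * R⁻¹) * M := by
        rw [nonsing_inv_mul _ hL, mul_nonsing_inv _ hR]; noncomm_ring
    _ = _ := by noncomm_ring

end Matrix

theorem stmt16_general (N : ℕ) (L R A B : Matrix (Fin N) (Fin N) ℂ) (e a b : Fin N → ℂ)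
    (hL : IsUnit L) (hR : IsUnit R)
    (hA : L * A - A * R = vecMulVec e a)
    (hB : R * B - B * L = vecMulVec e b)
    (hBA : IsUnit (1 - B * A)) :
    let q : ℂ := a ᵥ* ((1 - B * A)⁻¹ * R⁻¹) ⬝ᵥ e
    let r : ℂ := -(b ᵥ* (L⁻¹ * (1 - A * B)⁻¹) ⬝ᵥ e)
    (1 - A * R * B * L⁻¹).det * (1 - A * R⁻¹ * B * L).det
      = (1 - A * B).det ^ 2 * (1 - q * r) := by
  intro q r
  rw [isUnit_iff_isUnit_det] at hL hR hBA
  have hAB : IsUnit (1 - A * B).det := by rwa [det_one_sub_mul_comm]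
  have hLAR : L⁻¹ * A * R = A + vecMulVec (-(L⁻¹ *ᵥ e)) a := by
    rw [neg_vecMulVec, ← mul_vecMulVec, ← hA, Matrix.mul_sub, nonsing_inv_mul_cancel_left _ _ hL,
      Matrix.mul_assoc]
    abel
  have hLAR' : L * A * R⁻¹ = A + vecMulVec e (a ᵥ* R⁻¹) := by
    rw [← vecMulVec_mul, ← hA, Matrix.sub_mul, mul_nonsing_inv_cancel_right _ _ hR]
    abel
  rw [det_one_sub_twisted_mul hLAR hAB, det_one_sub_twisted_mul hLAR' hAB, dotProduct_neg,
    dotProduct_mulVec, vecMul_vecMul, vecMul_vecMul]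
  set x := a ᵥ* (B * (1 - A * B)⁻¹ * L⁻¹) ⬝ᵥ e
  set y := a ᵥ* (R⁻¹ * (B * (1 - A * B)⁻¹)) ⬝ᵥ e
  have hqr : q * r = -(x - y - x * y) :=
    calc q * r = -(a ᵥ* ((1 - B * A)⁻¹ * R⁻¹ * vecMulVec e b * (L⁻¹ * (1 - A * B)⁻¹)) ⬝ᵥ e) := by
          rw [vecMul_mul_vecMulVec_mul_dotProduct, mul_neg]
      _ = -(x - y - x * y) := by
          rw [← hB, inv_one_sub_mul_mul_twisted_commutator hL hR hAB, hA, vecMul_sub, vecMul_sub,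
            sub_dotProduct, sub_dotProduct, vecMul_mul_vecMulVec_mul_dotProduct]
  rw [hqr]
  ring

/-- For `L, R` invertible diagonal, rank-one conditions `LA − AR = |e⟩⟨a|`,
`RB − BL = |e⟩⟨b|`, `q = ⟨a|(1−BA)⁻¹R⁻¹|e⟩`, `r = −⟨b|L⁻¹(1−AB)⁻¹|e⟩`, one has
`det(1 − ARBL⁻¹) det(1 − AR⁻¹BL) = det(1 − AB)² (1 − q r)`. -/
theorem stmt16 (N : ℕ) (L R A B : Matrix (Fin N) (Fin N) ℂ) (e a b : Fin N → ℂ)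
    (hLd : L.IsDiag) (hRd : R.IsDiag) (hL : IsUnit L) (hR : IsUnit R)
    (hA : L * A - A * R = vecMulVec e a)
    (hB : R * B - B * L = vecMulVec e b)
    (hBA : IsUnit (1 - B * A)) :
    let q : ℂ := a ᵥ* ((1 - B * A)⁻¹ * R⁻¹) ⬝ᵥ e
    let r : ℂ := -(b ᵥ* (L⁻¹ * (1 - A * B)⁻¹) ⬝ᵥ e)
    (1 - A * R * B * L⁻¹).det * (1 - A * R⁻¹ * B * L).det
      = (1 - A * B).det ^ 2 * (1 - q * r) :=
  stmt16_general N L R A B e a b hL hR hA hB hBA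
end

section
/- Let L, R be invertible diagonal N×N complex matrices and μ a complex number such that 1 + μL and 1 + μR are invertible. Let |e⟩ be a column vector, ⟨a|, ⟨b| row vectors, and A, B N×N complex matrices satisfying L·A − A·R = |e⟩⟨a| and R·B − B·L = |e⟩⟨b|. Assume 1 − BA, 1 − BL⁻¹AR, and 1 − B(1+μL)⁻¹A(1+μR) are invertible. Set τ = det(1 − AB), τ_S = det(1 − ARBL⁻¹), τ_X = det(1 − A(1+μR)B(1+μL)⁻¹), τ_SX = det(1 − AR(1+μR)BL⁻¹(1+μL)⁻¹), σ_S = τ_S · ⟨a|R(1 − BL⁻¹AR)⁻¹R⁻¹|e⟩, and ρ_X = −τ_X · ⟨b|(1+μL)⁻¹L⁻¹(1 − A(1+μR)B(1+μL)⁻¹)⁻¹|e⟩. Then μ·σ_S·ρ_X − τ_S·τ_X + τ·τ_SX = 0. -/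
/-!
Under the displacement equations `LA - AR = |e⟩⟨a|` and `RB - BL = |e⟩⟨b|`, both shifts
(`A ↦ A(1+μR)`, `B ↦ B(1+μL)⁻¹` and `A ↦ AR`, `B ↦ BL⁻¹`) change `1 - AB` only by a
conjugation and a rank-one term. The matrix determinant lemma therefore gives
`τ_X = τ (1 + μα)` and `τ_SX = τ_S (1 + μα_S)` with `α = ⟨a|B(1-AB)⁻¹(1+μL)⁻¹|e⟩` and `α_S`
its S-shift. Writing the S-shift as `B ↦ X = RBL⁻¹`, the resolvent identity
`X(1-AX)⁻¹ - B(1-AB)⁻¹ = (1-XA)⁻¹(X-B)(1-AB)⁻¹` with `X - B = |e⟩⟨bL⁻¹|` gives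
`α_S - α = (σ_S/τ_S) β` for `β = ⟨b|L⁻¹(1-AB)⁻¹(1+μL)⁻¹|e⟩`, and the Sherman–Morrison formula
for the X-shifted resolvent gives `β = -(1 + μα) ρ_X/τ_X`. Substituting these four relations
makes the bilinear identity an identity of polynomials.
-/

open Matrix

namespace Matrix

variable {n 𝕜 : Type*} [Fintype n] [CommRing 𝕜]

theorem vecMul_mul_vecMulVec_mul_dotProduct_s17 (a u v w : n → 𝕜) (M N : Matrix n n 𝕜) :
    a ᵥ* (M * vecMulVec u v * N) ⬝ᵥ w = (a ᵥ* M ⬝ᵥ u) * (v ᵥ* N ⬝ᵥ w) := by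
  rw [mul_vecMulVec, vecMulVec_mul, vecMul_vecMulVec, smul_dotProduct, smul_eq_mul,
    dotProduct_mulVec]

variable [DecidableEq n]

theorem one_add_smul_mul_sub_mul_one_add_smul {L R A : Matrix n n 𝕜} {e a : n → 𝕜} (μ : 𝕜)
    (hA : L * A - A * R = vecMulVec e a) :
    (1 + μ • L) * A - A * (1 + μ • R) = vecMulVec e (μ • a) := by
  rw [vecMulVec_smul, ← hA]
  simp only [Matrix.add_mul, Matrix.mul_add, Matrix.one_mul, Matrix.mul_one, Matrix.smul_mul,
    Matrix.mul_smul, smul_sub]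
  abel

theorem isUnit_one_sub_mul_comm (A B : Matrix n n 𝕜) :
    IsUnit (1 - A * B) ↔ IsUnit (1 - B * A) := by
  rw [isUnit_iff_isUnit_det, isUnit_iff_isUnit_det, det_one_sub_mul_comm]

theorem conj_nonsing_inv {R : Matrix n n 𝕜} (hR : IsUnit R) (M : Matrix n n 𝕜) :
    R * M⁻¹ * R⁻¹ = (R * M * R⁻¹)⁻¹ := by
  rw [Matrix.mul_inv_rev, Matrix.mul_inv_rev,
    nonsing_inv_nonsing_inv _ ((isUnit_iff_isUnit_det _).mp hR), Matrix.mul_assoc]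

theorem mul_nonsing_inv_one_sub_mul {X A : Matrix n n 𝕜} (h : IsUnit (1 - X * A)) :
    X * (1 - A * X)⁻¹ = (1 - X * A)⁻¹ * X := by
  have hXA := (isUnit_iff_isUnit_det _).mp h
  have hAX := (isUnit_iff_isUnit_det _).mp ((isUnit_one_sub_mul_comm X A).mp h)
  calc X * (1 - A * X)⁻¹ = (1 - X * A)⁻¹ * ((1 - X * A) * X) * (1 - A * X)⁻¹ := by
        rw [← Matrix.mul_assoc, nonsing_inv_mul _ hXA, Matrix.one_mul]
    _ = (1 - X * A)⁻¹ * X * ((1 - A * X) * (1 - A * X)⁻¹) := by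
        simp only [Matrix.sub_mul, Matrix.mul_sub, Matrix.one_mul, Matrix.mul_assoc]
    _ = (1 - X * A)⁻¹ * X := by rw [mul_nonsing_inv _ hAX, Matrix.mul_one]

theorem mul_nonsing_inv_one_sub_mul_sub {X B A : Matrix n n 𝕜} (hX : IsUnit (1 - X * A))
    (hB : IsUnit (1 - A * B)) :
    X * (1 - A * X)⁻¹ - B * (1 - A * B)⁻¹ = (1 - X * A)⁻¹ * (X - B) * (1 - A * B)⁻¹ := by
  have hXA := (isUnit_iff_isUnit_det _).mp hX
  have hAB := (isUnit_iff_isUnit_det _).mp hB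
  calc X * (1 - A * X)⁻¹ - B * (1 - A * B)⁻¹
      = (1 - X * A)⁻¹ * (X * ((1 - A * B) * (1 - A * B)⁻¹))
        - ((1 - X * A)⁻¹ * (1 - X * A)) * B * (1 - A * B)⁻¹ := by
        rw [mul_nonsing_inv_one_sub_mul hX, mul_nonsing_inv _ hAB, nonsing_inv_mul _ hXA,
          Matrix.mul_one, Matrix.one_mul]
    _ = (1 - X * A)⁻¹ * (X - B) * (1 - A * B)⁻¹ := by noncomm_ring

theorem one_sub_mul_mul_mul_nonsing_inv {P Q A B : Matrix n n 𝕜} {e c : n → 𝕜} (hP : IsUnit P)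
    (h : P * A - A * Q = vecMulVec e c) :
    1 - A * Q * B * P⁻¹ = P * (1 - A * B) * P⁻¹ + vecMulVec e (c ᵥ* (B * P⁻¹)) := by
  have hPP : P * P⁻¹ = 1 := mul_nonsing_inv _ ((isUnit_iff_isUnit_det _).mp hP)
  rw [← vecMulVec_mul, ← h]
  calc 1 - A * Q * B * P⁻¹ = P * P⁻¹ - A * Q * B * P⁻¹ := by rw [hPP]
    _ = _ := by noncomm_ring

theorem det_one_sub_mul_mul_mul_nonsing_inv {P Q A B : Matrix n n 𝕜} {e c : n → 𝕜}
    (hP : IsUnit P) (hAB : IsUnit (1 - A * B)) (h : P * A - A * Q = vecMulVec e c) :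
    (1 - A * Q * B * P⁻¹).det = (1 - A * B).det * (1 + c ᵥ* (B * (1 - A * B)⁻¹ * P⁻¹) ⬝ᵥ e) := by
  have hP' := (isUnit_iff_isUnit_det _).mp hP
  have hAB' := (isUnit_iff_isUnit_det _).mp hAB
  have hfactor : 1 - A * Q * B * P⁻¹
      = P * ((1 - A * B) * (1 + vecMulVec (((1 - A * B)⁻¹ * P⁻¹) *ᵥ e) (c ᵥ* B))) * P⁻¹ := by
    rw [one_sub_mul_mul_mul_nonsing_inv hP h, Matrix.mul_add (1 - A * B), Matrix.mul_one,
      mul_vecMulVec, mulVec_mulVec, ← Matrix.mul_assoc (1 - A * B), mul_nonsing_inv _ hAB',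
      Matrix.one_mul, Matrix.mul_add, Matrix.add_mul, ← mul_vecMulVec, ← Matrix.mul_assoc P,
      mul_nonsing_inv _ hP', Matrix.one_mul, vecMulVec_mul, vecMul_vecMul]
  rw [hfactor, det_conj hP, det_mul, vecMulVec_eq Unit, det_one_add_replicateCol_mul_replicateRow,
    dotProduct_mulVec, vecMul_vecMul, Matrix.mul_assoc]

theorem nonsing_inv_mul_nonsing_inv_mulVec {P Q A B : Matrix n n 𝕜} {e c : n → 𝕜}
    (hP : IsUnit P) (hAB : IsUnit (1 - A * B)) (hY : IsUnit (1 - A * Q * B * P⁻¹))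
    (h : P * A - A * Q = vecMulVec e c) :
    ((1 - A * B)⁻¹ * P⁻¹) *ᵥ e
      = (1 + c ᵥ* (B * (1 - A * B)⁻¹ * P⁻¹) ⬝ᵥ e) • ((P⁻¹ * (1 - A * Q * B * P⁻¹)⁻¹) *ᵥ e) := by
  have hP' := (isUnit_iff_isUnit_det _).mp hP
  have hAB' := (isUnit_iff_isUnit_det _).mp hAB
  have hY' := (isUnit_iff_isUnit_det _).mp hY
  have hfactor : (1 - A * Q * B * P⁻¹) * (P * (1 - A * B)⁻¹ * P⁻¹)
      = 1 + vecMulVec e (c ᵥ* (B * (1 - A * B)⁻¹ * P⁻¹)) := by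
    rw [one_sub_mul_mul_mul_nonsing_inv hP h, Matrix.add_mul, vecMulVec_mul, vecMul_vecMul]
    simp only [Matrix.mul_assoc, nonsing_inv_mul_cancel_left _ _ hP',
      mul_nonsing_inv_cancel_left _ _ hAB', mul_nonsing_inv _ hP']
  have hmat : (1 - A * B)⁻¹ * P⁻¹
      = P⁻¹ * (1 - A * Q * B * P⁻¹)⁻¹ * (1 + vecMulVec e (c ᵥ* (B * (1 - A * B)⁻¹ * P⁻¹))) := by
    rw [← hfactor, Matrix.mul_assoc P⁻¹, nonsing_inv_mul_cancel_left _ _ hY', Matrix.mul_assoc P,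
      nonsing_inv_mul_cancel_left _ _ hP']
  rw [hmat, ← mulVec_mulVec, Matrix.add_mulVec, one_mulVec, vecMulVec_mulVec, op_smul_eq_smul,
    mulVec_add, mulVec_smul, add_smul, one_smul, add_comm]

theorem mul_mul_nonsing_inv_resolvent_sub {L R A B : Matrix n n 𝕜} {e b : n → 𝕜} (hL : IsUnit L)
    (hR : IsUnit R) (hB : R * B - B * L = vecMulVec e b) (hAB : IsUnit (1 - A * B))
    (hBA : IsUnit (1 - B * L⁻¹ * A * R)) :
    R * B * L⁻¹ * (1 - A * R * B * L⁻¹)⁻¹ - B * (1 - A * B)⁻¹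
      = R * (1 - B * L⁻¹ * A * R)⁻¹ * R⁻¹ * vecMulVec e (b ᵥ* L⁻¹) * (1 - A * B)⁻¹ := by
  have hR' := (isUnit_iff_isUnit_det _).mp hR
  have hX : R * B * L⁻¹ - B = vecMulVec e (b ᵥ* L⁻¹) := by
    rw [← vecMulVec_mul, ← hB, Matrix.sub_mul, Matrix.mul_assoc B,
      mul_nonsing_inv _ ((isUnit_iff_isUnit_det _).mp hL), Matrix.mul_one]
  have hconj : R * (1 - B * L⁻¹ * A * R) * R⁻¹ = 1 - R * B * L⁻¹ * A := by
    simp only [Matrix.mul_sub, Matrix.sub_mul, Matrix.mul_one, mul_nonsing_inv _ hR',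
      Matrix.mul_assoc]
  have hunit : IsUnit (1 - R * B * L⁻¹ * A) := by
    rw [← hconj]; exact (hR.mul hBA).mul ((isUnit_nonsing_inv_iff).mpr hR)
  rw [conj_nonsing_inv hR, hconj, ← hX, show A * R * B * L⁻¹ = A * (R * B * L⁻¹) by
    simp only [Matrix.mul_assoc]]
  exact mul_nonsing_inv_one_sub_mul_sub hunit hAB

section Shift

variable {L R A B : Matrix n n 𝕜} {e a : n → 𝕜} {μ : 𝕜}

theorem det_one_sub_mul_one_add_smul_mul_mul_nonsing_inv (hμL : IsUnit (1 + μ • L))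
    (hAB : IsUnit (1 - A * B)) (hA : L * A - A * R = vecMulVec e a) :
    (1 - A * (1 + μ • R) * B * (1 + μ • L)⁻¹).det
      = (1 - A * B).det * (1 + μ * (a ᵥ* (B * (1 - A * B)⁻¹ * (1 + μ • L)⁻¹) ⬝ᵥ e)) := by
  rw [det_one_sub_mul_mul_mul_nonsing_inv hμL hAB (one_add_smul_mul_sub_mul_one_add_smul μ hA),
    smul_vecMul, smul_dotProduct, smul_eq_mul]

theorem commute_nonsing_inv_one_add_smul (L : Matrix n n 𝕜) (μ : 𝕜) :
    Commute L⁻¹ (1 + μ • L)⁻¹ := by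
  simp only [nonsing_inv_eq_ringInverse]
  exact ((Commute.one_right L).add_right ((Commute.refl L).smul_right μ)).ringInverse_ringInverse

theorem vecMul_nonsing_inv_mul_resolvent_dotProduct (hμL : IsUnit (1 + μ • L))
    (hAB : IsUnit (1 - A * B)) (hY : IsUnit (1 - A * (1 + μ • R) * B * (1 + μ • L)⁻¹))
    (hA : L * A - A * R = vecMulVec e a) (f : n → 𝕜) :
    f ᵥ* (L⁻¹ * (1 - A * B)⁻¹ * (1 + μ • L)⁻¹) ⬝ᵥ e
      = (1 + μ * (a ᵥ* (B * (1 - A * B)⁻¹ * (1 + μ • L)⁻¹) ⬝ᵥ e))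
        * (f ᵥ* ((1 + μ • L)⁻¹ * L⁻¹ * (1 - A * (1 + μ • R) * B * (1 + μ • L)⁻¹)⁻¹) ⬝ᵥ e) := by
  have := congrArg ((f ᵥ* L⁻¹) ⬝ᵥ ·)
    (nonsing_inv_mul_nonsing_inv_mulVec hμL hAB hY (one_add_smul_mul_sub_mul_one_add_smul μ hA))
  rw [(commute_nonsing_inv_one_add_smul L μ).eq.symm]
  simpa only [dotProduct_smul, dotProduct_mulVec, vecMul_vecMul, smul_vecMul, smul_dotProduct,
    smul_eq_mul, Matrix.mul_assoc] using this

end Shift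

end Matrix

theorem stmt17_general (N : ℕ) (L R : Matrix (Fin N) (Fin N) ℂ) (μ : ℂ)
    (A B : Matrix (Fin N) (Fin N) ℂ) (e a b : Fin N → ℂ)
    (hL : IsUnit L) (hR : IsUnit R)
    (hμL : IsUnit (1 + μ • L))
    (hA : L * A - A * R = vecMulVec e a)
    (hB : R * B - B * L = vecMulVec e b)
    (h1 : IsUnit (1 - B * A))
    (h2 : IsUnit (1 - B * L⁻¹ * A * R))
    (h3 : IsUnit (1 - B * (1 + μ • L)⁻¹ * A * (1 + μ • R))) :
    let τ : ℂ := (1 - A * B).det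
    let τS : ℂ := (1 - A * R * B * L⁻¹).det
    let τX : ℂ := (1 - A * (1 + μ • R) * B * (1 + μ • L)⁻¹).det
    let τSX : ℂ := (1 - A * R * (1 + μ • R) * B * L⁻¹ * (1 + μ • L)⁻¹).det
    let σS : ℂ := τS * (a ᵥ* (R * (1 - B * L⁻¹ * A * R)⁻¹ * R⁻¹) ⬝ᵥ e)
    let ρX : ℂ := -(τX *
      (b ᵥ* ((1 + μ • L)⁻¹ * L⁻¹ * (1 - A * (1 + μ • R) * B * (1 + μ • L)⁻¹)⁻¹) ⬝ᵥ e))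
    μ * σS * ρX - τS * τX + τ * τSX = 0 := by
  intro τ τS τX τSX σS ρX
  have hAB : IsUnit (1 - A * B) := (isUnit_one_sub_mul_comm B A).mp h1
  have hARB : IsUnit (1 - A * R * (B * L⁻¹)) := by
    rw [isUnit_one_sub_mul_comm]; simpa only [Matrix.mul_assoc] using h2
  have hY : IsUnit (1 - A * (1 + μ • R) * B * (1 + μ • L)⁻¹) := by
    rw [Matrix.mul_assoc, isUnit_one_sub_mul_comm]; simpa only [Matrix.mul_assoc] using h3
  have hAR : L * (A * R) - A * R * R = vecMulVec e (a ᵥ* R) := by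
    rw [← vecMulVec_mul, ← hA]
    simp only [Matrix.sub_mul, Matrix.mul_assoc]
  have hτX : τX = τ * (1 + μ * (a ᵥ* (B * (1 - A * B)⁻¹ * (1 + μ • L)⁻¹) ⬝ᵥ e)) :=
    det_one_sub_mul_one_add_smul_mul_mul_nonsing_inv hμL hAB hA
  have hτSX : τSX = τS * (1 + μ *
      (a ᵥ* (R * B * L⁻¹ * (1 - A * R * B * L⁻¹)⁻¹ * (1 + μ • L)⁻¹) ⬝ᵥ e)) := by
    simpa only [τSX, τS, vecMul_vecMul, Matrix.mul_assoc]
      using det_one_sub_mul_one_add_smul_mul_mul_nonsing_inv hμL hARB hAR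
  have hσ : a ᵥ* (R * B * L⁻¹ * (1 - A * R * B * L⁻¹)⁻¹ * (1 + μ • L)⁻¹) ⬝ᵥ e
      - a ᵥ* (B * (1 - A * B)⁻¹ * (1 + μ • L)⁻¹) ⬝ᵥ e
      = (a ᵥ* (R * (1 - B * L⁻¹ * A * R)⁻¹ * R⁻¹) ⬝ᵥ e)
        * (b ᵥ* (L⁻¹ * (1 - A * B)⁻¹ * (1 + μ • L)⁻¹) ⬝ᵥ e) := by
    rw [← sub_dotProduct, ← vecMul_sub, ← Matrix.sub_mul,
      mul_mul_nonsing_inv_resolvent_sub hL hR hB hAB h2, Matrix.mul_assoc _ (1 - A * B)⁻¹,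
      vecMul_mul_vecMulVec_mul_dotProduct_s17, vecMul_vecMul, ← Matrix.mul_assoc L⁻¹]
  have hρ := vecMul_nonsing_inv_mul_resolvent_dotProduct hμL hAB hY hA b
  change μ * (τS * _) * -(τX * _) - τS * τX + τ * τSX = 0
  rw [hτX, hτSX]
  linear_combination τ * τS * μ * hσ
    + τ * τS * μ * (a ᵥ* (R * (1 - B * L⁻¹ * A * R)⁻¹ * R⁻¹) ⬝ᵥ e) * hρ

/-- With the rank-one conditions and the indicated shifted matrices, the tau-functions
satisfy the bilinear equation `μ σ_S ρ_X − τ_S τ_X + τ τ_SX = 0`. -/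
theorem stmt17 (N : ℕ) (L R : Matrix (Fin N) (Fin N) ℂ) (μ : ℂ)
    (A B : Matrix (Fin N) (Fin N) ℂ) (e a b : Fin N → ℂ)
    (hLd : L.IsDiag) (hRd : R.IsDiag) (hL : IsUnit L) (hR : IsUnit R)
    (hμL : IsUnit (1 + μ • L)) (hμR : IsUnit (1 + μ • R))
    (hA : L * A - A * R = vecMulVec e a)
    (hB : R * B - B * L = vecMulVec e b)
    (h1 : IsUnit (1 - B * A))
    (h2 : IsUnit (1 - B * L⁻¹ * A * R))
    (h3 : IsUnit (1 - B * (1 + μ • L)⁻¹ * A * (1 + μ • R))) :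
    let τ : ℂ := (1 - A * B).det
    let τS : ℂ := (1 - A * R * B * L⁻¹).det
    let τX : ℂ := (1 - A * (1 + μ • R) * B * (1 + μ • L)⁻¹).det
    let τSX : ℂ := (1 - A * R * (1 + μ • R) * B * L⁻¹ * (1 + μ • L)⁻¹).det
    let σS : ℂ := τS * (a ᵥ* (R * (1 - B * L⁻¹ * A * R)⁻¹ * R⁻¹) ⬝ᵥ e)
    let ρX : ℂ := -(τX *
      (b ᵥ* ((1 + μ • L)⁻¹ * L⁻¹ * (1 - A * (1 + μ • R) * B * (1 + μ • L)⁻¹)⁻¹) ⬝ᵥ e))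
    μ * σS * ρX - τS * τX + τ * τSX = 0 :=
  stmt17_general N L R μ A B e a b hL hR hμL hA hB h1 h2 h3
end

section
/- Let A, B, L, R be N×N complex matrices with L and R invertible, and suppose the entrywise complex conjugates satisfy conj(A) = −R·B·L⁻¹ and conj(B) = −L·A·R⁻¹. Then det(1 − A·B) is a real number. -/
open Matrix

/-- If `conj A = −R B L⁻¹` and `conj B = −L A R⁻¹` (entrywise conjugation), with `L, R`
invertible, then `det(1 − AB)` is real. -/
theorem stmt19 (N : ℕ) (A B L R : Matrix (Fin N) (Fin N) ℂ)
    (hL : IsUnit L) (hR : IsUnit R)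
    (hA : A.map (starRingEnd ℂ) = -(R * B * L⁻¹))
    (hB : B.map (starRingEnd ℂ) = -(L * A * R⁻¹)) :
    ((1 - A * B).det).im = 0 := by
  have hLd : IsUnit L.det := (Matrix.isUnit_iff_isUnit_det L).mp hL
  have hRd : IsUnit R.det := (Matrix.isUnit_iff_isUnit_det R).mp hR
  have hLinv : L⁻¹ * L = 1 := Matrix.nonsing_inv_mul L hLd
  have hRinv : R * R⁻¹ = 1 := Matrix.mul_nonsing_inv R hRd
  have hconj : (starRingEnd ℂ) ((1 - A * B).det) = (1 - A * B).det := by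
    rw [RingHom.map_det, RingHom.mapMatrix_apply]
    have hmap : (1 - A * B).map (starRingEnd ℂ)
        = 1 - A.map (starRingEnd ℂ) * B.map (starRingEnd ℂ) := by
      ext i j
      simp [Matrix.mul_apply, Matrix.one_apply, map_sum, apply_ite]
    rw [hmap, hA, hB, neg_mul_neg]
    have : R * B * L⁻¹ * (L * A * R⁻¹) = R * (B * A) * R⁻¹ := by
      calc R * B * L⁻¹ * (L * A * R⁻¹) = R * B * (L⁻¹ * L) * A * R⁻¹ := by
            noncomm_ring
        _ = R * (B * A) * R⁻¹ := by rw [hLinv]; noncomm_ring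
    rw [this]
    have h2 : 1 - R * (B * A) * R⁻¹ = R * (1 - B * A) * R⁻¹ := by
      rw [Matrix.mul_sub, Matrix.sub_mul, Matrix.mul_one, hRinv, Matrix.mul_assoc]
    rw [h2, Matrix.det_mul, Matrix.det_mul, mul_comm, ← mul_assoc,
      ← Matrix.det_mul, Matrix.nonsing_inv_mul R hRd, Matrix.det_one, one_mul]
    have := Matrix.det_one_add_mul_comm (-A) B
    simpa [mul_neg, neg_mul, sub_eq_add_neg] using this.symm
  have := congrArg Complex.im hconj
  simp [Complex.conj_im] at this
  linarith
end
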